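/- Any BST-extension proving at least one UC-instance is deductively equivalent to an NST-fragment: if Γ is a set of L-sentences such that some UC-instance α is a semantic consequence of BST ∪ Γ, then there exists a set Δ of UC-instances such that for every L-sentence χ, χ is a semantic consequence of BST ∪ Γ if and only if χ is a semantic consequence of BST ∪ Δ. -/

import Mathlib

/-!
Let `α = ∃y∀x(x∈y ↔ ψ(x))` be the UC-instance proved by `BST ∪ Γ`. For a sentence `χ`, the
UC-instance of `(χ ∧ ψ(x)) ∨ (¬χ ∧ x ∉ x)` is, in the presence of `α`, equivalent to `χ`: if `χ`
holds it is `α` again, and otherwise it asserts that Russell's set exists, which is refutable in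
pure logic. Hence `Δ = {α} ∪ {these UC-instances for χ ∈ Γ}` has the same models as `Γ` over `BST`.
-/

open FirstOrder FirstOrder.Language

namespace SetParadox

/-- The language with a single binary relation symbol `∈`. -/
def L : Language := ⟨fun _ => Empty, fun n => match n with | 2 => Unit | _ => Empty⟩

/-- The membership relation symbol. -/
def memRel : L.Relations 2 := Unit.unit

/-- `memF t₁ t₂` is the atomic formula `t₁ ∈ t₂`. -/
def memF {n : ℕ} (t₁ t₂ : L.Term (Empty ⊕ Fin n)) : L.BoundedFormula Empty n :=
  memRel.boundedFormula₂ t₁ t₂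

/-- Extensionality: `∀y∀z(∀x(x∈y ↔ x∈z) → y=z)`. -/
def extAx : L.Sentence :=
  ∀' ∀' ((∀' (memF (&2) (&0) ⇔ memF (&2) (&1))) ⟹ ((&0) =' (&1)))

/-- Basic set theory: the theory whose only axiom is extensionality. -/
def BST : L.Theory := {extAx}

/-- The UC-instance `∃y∀x(x∈y ↔ φ(x))` determined by a formula `φ` with one free
variable `x` (so that `y` does not occur free in `φ`). -/
def UCinst (φ : L.BoundedFormula Empty 1) : L.Sentence :=
  ∃' ∀' (memF (&1) (&0) ⇔ φ.liftAt 1 0)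


/-- A sentence is a UC-instance if it has the form `∃y∀x(x∈y ↔ φ(x))`
where `y` does not occur free in `φ`. -/
def IsUCInstance (σ : L.Sentence) : Prop :=
  ∃ φ : L.BoundedFormula Empty 1, σ = UCinst φ

variable {M : Type*} [L.Structure M]

theorem realize_UCinst (φ : L.BoundedFormula Empty 1) :
    M ⊨ UCinst φ ↔ ∃ y : M, ∀ x : M,
      (Structure.RelMap memRel ![x, y] ↔ φ.Realize Empty.elim ![x]) := by
  simp only [UCinst, Sentence.Realize, Formula.Realize, memF, BoundedFormula.realize_ex,
    BoundedFormula.realize_all, BoundedFormula.realize_iff, BoundedFormula.realize_rel₂,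
    BoundedFormula.realize_liftAt (by norm_num : (0:ℕ) ≤ 1),
    Subsingleton.elim (default : Empty → M) Empty.elim]
  refine exists_congr fun y => forall_congr' fun x => ?_
  have h_lift : (Fin.snoc (Fin.snoc default y) x ∘
      fun i : Fin 1 => if (i:ℕ) < 0 then Fin.castAdd 1 i else i.addNat 1) = ![x] := by
    funext i
    fin_cases i
    simp [Fin.snoc]
  have h_vars : Fin.snoc (Fin.snoc (default : Fin 0 → M) y) x = ![y, x] := by
    funext i
    fin_cases i <;> simp [Fin.snoc]
  rw [h_lift, h_vars]
  simp

theorem realize_UCinst_congr {φ φ' : L.BoundedFormula Empty 1}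
    (h : ∀ x : M, φ.Realize Empty.elim ![x] ↔ φ'.Realize Empty.elim ![x]) :
    M ⊨ UCinst φ ↔ M ⊨ UCinst φ' := by
  simp only [realize_UCinst, h]

def russell : L.BoundedFormula Empty 1 := ∼(memF (&0) (&0))

theorem realize_russell (x : M) :
    russell.Realize Empty.elim ![x] ↔ ¬ Structure.RelMap memRel ![x, x] := by
  simp only [russell, memF, BoundedFormula.realize_not, BoundedFormula.realize_rel₂]
  simp

theorem not_realize_UCinst_russell : ¬ M ⊨ UCinst russell := by
  rw [realize_UCinst]
  rintro ⟨y, hy⟩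
  exact iff_not_self ((hy y).trans (realize_russell y))

def russellIte (χ : L.Sentence) (ψ : L.BoundedFormula Empty 1) : L.BoundedFormula Empty 1 :=
  (χ.liftAt 1 0 ⊓ ψ) ⊔ (∼(χ.liftAt 1 0) ⊓ russell)

theorem realize_liftAt_sentence (χ : L.Sentence) (v : Empty → M) (xs : Fin 1 → M) :
    (χ.liftAt 1 0).Realize v xs ↔ M ⊨ χ := by
  rw [BoundedFormula.realize_liftAt (by norm_num : (0:ℕ) ≤ 0), Sentence.Realize,
    Formula.Realize, Subsingleton.elim v default]
  exact iff_of_eq (congrArg _ (Subsingleton.elim _ _))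

theorem realize_russellIte (χ : L.Sentence) (ψ : L.BoundedFormula Empty 1) (x : M) :
    (russellIte χ ψ).Realize Empty.elim ![x] ↔
      (M ⊨ χ ∧ ψ.Realize Empty.elim ![x]) ∨ (¬ M ⊨ χ ∧ russell.Realize Empty.elim ![x]) := by
  simp only [russellIte, BoundedFormula.realize_sup, BoundedFormula.realize_inf,
    BoundedFormula.realize_not, realize_liftAt_sentence]

theorem realize_UCinst_russellIte_iff {ψ : L.BoundedFormula Empty 1} (hψ : M ⊨ UCinst ψ)
    (χ : L.Sentence) : M ⊨ UCinst (russellIte χ ψ) ↔ M ⊨ χ := by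
  by_cases hχ : M ⊨ χ
  · refine iff_of_true ((realize_UCinst_congr fun x => ?_).2 hψ) hχ
    simp [realize_russellIte, hχ]
  · refine iff_of_false (fun h => not_realize_UCinst_russell
      ((realize_UCinst_congr fun x => ?_).1 h)) hχ
    simp [realize_russellIte, hχ]

theorem equivalent_to_NST_fragment (Γ : Set L.Sentence)
    (h : ∃ α : L.Sentence, IsUCInstance α ∧ (BST ∪ Γ) ⊨ᵇ α) :
    ∃ Δ : Set L.Sentence, (∀ σ ∈ Δ, IsUCInstance σ) ∧
      ∀ χ : L.Sentence, ((BST ∪ Γ) ⊨ᵇ χ ↔ (BST ∪ Δ) ⊨ᵇ χ) := by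
  obtain ⟨α, ⟨ψ, rfl⟩, hα⟩ := h
  let Δ := insert (UCinst ψ) ((fun γ => UCinst (russellIte γ ψ)) '' Γ)
  have hΔ : ∀ σ ∈ Δ, IsUCInstance σ := by
    rintro σ (rfl | ⟨γ, -, rfl⟩) <;> exact ⟨_, rfl⟩
  have hΓΔ : ∀ σ ∈ BST ∪ Δ, (BST ∪ Γ) ⊨ᵇ σ := by
    rintro σ (hσ | rfl | ⟨γ, hγ, rfl⟩)
    · exact Theory.models_sentence_of_mem (Or.inl hσ)
    · exact hα
    · refine Theory.models_sentence_iff.2 fun M => ?_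
      exact (realize_UCinst_russellIte_iff (hα.realize_sentence M) γ).2
        (Theory.realize_sentence_of_mem (BST ∪ Γ) (Set.mem_union_right _ hγ))
  have hΔΓ : ∀ σ ∈ BST ∪ Γ, (BST ∪ Δ) ⊨ᵇ σ := by
    rintro σ (hσ | hσ)
    · exact Theory.models_sentence_of_mem (Or.inl hσ)
    · refine Theory.models_sentence_iff.2 fun M => ?_
      have hψ : M ⊨ UCinst ψ := Theory.realize_sentence_of_mem (BST ∪ Δ)
        (Set.mem_union_right _ (Set.mem_insert _ _))
      exact (realize_UCinst_russellIte_iff hψ σ).1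
        (Theory.realize_sentence_of_mem (BST ∪ Δ)
          (Set.mem_union_right _ (Set.mem_insert_of_mem _ ⟨σ, hσ, rfl⟩)))
  exact ⟨Δ, hΔ, fun χ =>
    ⟨Theory.models_of_models_theory hΔΓ, Theory.models_of_models_theory hΓΔ⟩⟩

end SetParadox
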